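/- arXiv:2102.06396 — 4 statements merged into one kernel-verified Lean document; each statement's English description precedes it below -/
import Mathlib

section
/- Let B be a quaternion algebra over ℚ with reduced trace trd and reduced norm nrd, let R ⊆ B be an order, and let O be an order of discriminant Δ < 0 in an imaginary quadratic field K. Write V = {x ∈ B : trd(x) = 0} and R₀ = V ∩ (ℤ + 2R) (the Gross lattice of R). Then there exists a ring embedding O ↪ R if and only if |Δ| is represented by the quadratic lattice R₀ equipped with the reduced norm, i.e. there exists b ∈ R₀ with nrd(b) = |Δ|. -/
open Polynomial

/-- The imaginary quadratic order of discriminant `Δ`, presented as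
`ℤ[X]/(X² + |Δ|·X + (Δ² + |Δ|)/4)`, the minimal polynomial of `(Δ + √Δ)/2`. -/
noncomputable def ImagQuadOrder (Δ : ℤ) : Type :=
  AdjoinRoot ((X ^ 2 + C (-Δ) * X + C ((Δ ^ 2 - Δ) / 4) : ℤ[X]))

noncomputable instance (Δ : ℤ) : CommRing (ImagQuadOrder Δ) :=
  inferInstanceAs (CommRing (AdjoinRoot _))

/-!
An embedding of `O = ℤ[ω]`, `ω = (Δ + √Δ)/2`, into `R` is the same as a root `y ∈ R` of the
minimal polynomial of `ω`: injectivity is automatic, because a rational relation `c₀ + c₁ y = 0`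
would make the definite (as `Δ < 0`) norm form of `O` vanish at `(c₀, c₁)`. Completing the square,
such roots are the elements `y = (Δ + b)/2` with `b ^ 2 = Δ`; then `b = 2y - Δ ∈ ℤ + 2R`, and
conversely `b = a + 2r` gives `y = (b ^ 2 + b)/2 ∈ R` since `a ^ 2 + a` is even. Finally, in a
quaternion algebra `b ^ 2 = Δ` with `Δ` not a square forces `trd b = 0` (Cayley–Hamilton), and then
`nrd b = -b ^ 2 = |Δ|`.
-/

open scoped Quaternion

namespace AdjoinRoot

variable {S : Type*} [Ring S] {f : ℤ[X]}

/-- `AdjoinRoot.lift` needs a commutative target; over `ℤ` a root in any ring will do. -/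
noncomputable def liftInt (y : S) (hy : aeval y f = 0) : AdjoinRoot f →+* S :=
  Ideal.Quotient.lift _ (aeval y).toRingHom fun g hg => by
    obtain ⟨c, rfl⟩ := Ideal.mem_span_singleton'.mp hg
    simp [hy]

theorem liftInt_mk (y : S) (hy : aeval y f = 0) (g : ℤ[X]) :
    liftInt y hy (mk f g) = aeval y g :=
  rfl

theorem aeval_map_root (φ : AdjoinRoot f →+* S) : aeval (φ (root f)) f = 0 := by
  simpa [aeval_eq] using aeval_algHom_apply φ.toIntAlgHom (root f) f

theorem liftInt_injective {y : S} (hy : aeval y f = 0) (hf : f.Monic) (hdeg : f.natDegree ≤ 2)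
    (hind : ∀ c₀ c₁ : ℤ, (c₀ : S) + c₁ * y = 0 → c₀ = 0 ∧ c₁ = 0) :
    Function.Injective (liftInt y hy) := by
  refine (injective_iff_map_eq_zero _).mpr fun z hz => ?_
  obtain ⟨q, rfl⟩ := mk_surjective z
  set r := q %ₘ f
  have hqr : mk f q = mk f r := (mk_leftInverse hf (mk f q)).symm
  have hr : r.natDegree ≤ 1 := by
    by_cases h0 : r = 0
    · simp [h0]
    · have := natDegree_lt_natDegree h0 (degree_modByMonic_lt q hf)
      omega
  have hr' := eq_X_add_C_of_natDegree_le_one hr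
  rw [hqr, liftInt_mk, hr'] at hz
  simp only [map_add, map_mul, aeval_X, eq_intCast, map_intCast] at hz
  obtain ⟨h₀, h₁⟩ := hind _ _ ((add_comm _ _).trans hz)
  rw [hqr, hr', h₀, h₁]
  simp

end AdjoinRoot

namespace ImagQuadOrder

noncomputable def poly (Δ : ℤ) : ℤ[X] :=
  X ^ 2 + C (-Δ) * X + C ((Δ ^ 2 - Δ) / 4)

theorem poly_monic (Δ : ℤ) : (poly Δ).Monic := by
  unfold poly
  monicity!

theorem poly_natDegree_le (Δ : ℤ) : (poly Δ).natDegree ≤ 2 := by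
  unfold poly
  compute_degree

variable {Δ : ℤ} {S : Type*} [Ring S]

theorem four_dvd_sq_sub_self (hΔ4 : Δ % 4 = 0 ∨ Δ % 4 = 1) : 4 ∣ Δ ^ 2 - Δ := by
  rcases hΔ4 with h | h
  · obtain ⟨q, rfl⟩ := Int.dvd_of_emod_eq_zero h
    exact ⟨q * (4 * q - 1), by ring⟩
  · obtain ⟨q, hq⟩ : 4 ∣ Δ - 1 := Int.dvd_of_emod_eq_zero (by omega)
    exact ⟨Δ * q, by linear_combination Δ * hq⟩

theorem four_mul_aeval_poly (hΔ4 : Δ % 4 = 0 ∨ Δ % 4 = 1) (y : S) :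
    4 * aeval y (poly Δ) = (2 * y - Δ) ^ 2 - Δ := by
  have h4 : (4 : S) * ((Δ ^ 2 - Δ) / 4 : ℤ) = Δ ^ 2 - Δ := by
    exact_mod_cast congrArg (Int.cast (R := S)) (Int.mul_ediv_cancel' (four_dvd_sq_sub_self hΔ4))
  simp only [poly, map_add, map_mul, map_pow, aeval_X, eq_intCast, map_intCast]
  push_cast at h4 ⊢
  linear_combination (norm := noncomm_ring) h4 - 2 * (Int.cast_commute Δ y).eq

theorem aeval_poly_eq_zero_iff [IsAddTorsionFree S] (hΔ4 : Δ % 4 = 0 ∨ Δ % 4 = 1) {y : S} :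
    aeval y (poly Δ) = 0 ↔ (2 * y - Δ) ^ 2 = Δ := by
  rw [← sub_eq_zero (a := (2 * y - Δ) ^ 2), ← four_mul_aeval_poly hΔ4, ← Nat.cast_ofNat,
    ← nsmul_eq_mul, smul_eq_zero_iff_right four_ne_zero]

theorem eq_zero_of_intCast_add_intCast_mul_eq_zero [CharZero S] (hΔ : Δ < 0)
    (hΔ4 : Δ % 4 = 0 ∨ Δ % 4 = 1) {y : S} (hy : aeval y (poly Δ) = 0) {c₀ c₁ : ℤ}
    (h : (c₀ : S) + c₁ * y = 0) : c₀ = 0 ∧ c₁ = 0 := by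
  set m := (Δ ^ 2 - Δ) / 4
  have hm : 4 * m = Δ ^ 2 - Δ := Int.mul_ediv_cancel' (four_dvd_sq_sub_self hΔ4)
  -- `c₀ ^ 2 + Δ c₀ c₁ + m c₁ ^ 2` is the norm form of `ImagQuadOrder Δ`, definite as `Δ < 0`.
  have key : (C (c₀ ^ 2 + Δ * c₀ * c₁ + m * c₁ ^ 2) : ℤ[X]) =
      (C c₀ - C c₁ * X + C Δ * C c₁) * (C c₀ + C c₁ * X) + C c₁ ^ 2 * poly Δ := by
    simp only [poly, map_add, map_mul, map_pow, map_neg]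
    ring
  have hnorm : c₀ ^ 2 + Δ * c₀ * c₁ + m * c₁ ^ 2 = 0 := by
    have := congrArg (aeval y) key
    simp only [map_add, map_sub, map_mul, map_pow, aeval_X, eq_intCast, map_intCast, hy, h,
      mul_zero, add_zero] at this
    exact_mod_cast this
  have hc₁ : c₁ = 0 := by nlinarith [sq_nonneg (2 * c₀ + Δ * c₁), sq_nonneg c₁]
  subst hc₁
  simpa using hnorm

theorem exists_injective_ringHom_iff [CharZero S] (hΔ : Δ < 0) (hΔ4 : Δ % 4 = 0 ∨ Δ % 4 = 1) :
    (∃ f : ImagQuadOrder Δ →+* S, Function.Injective f) ↔ ∃ y : S, aeval y (poly Δ) = 0 :=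
  ⟨fun ⟨f, _⟩ => ⟨f (AdjoinRoot.root _), AdjoinRoot.aeval_map_root f⟩, fun ⟨y, hy⟩ =>
    ⟨AdjoinRoot.liftInt y hy, AdjoinRoot.liftInt_injective hy (poly_monic Δ) (poly_natDegree_le Δ)
      fun _ _ => eq_zero_of_intCast_add_intCast_mul_eq_zero hΔ hΔ4 hy⟩⟩

end ImagQuadOrder

namespace Subring

variable {A : Type*} [Ring A] {R : Subring A}

theorem exists_two_mul_eq_sq_add_self {r : A} (hr : r ∈ R) (a : ℤ) :
    ∃ y ∈ R, 2 * y = ((a : A) + 2 * r) ^ 2 + (a + 2 * r) := by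
  obtain ⟨k, hk⟩ := Int.even_mul_succ_self a
  refine ⟨k + (2 * a + 1) * r + 2 * r ^ 2, by aesop, ?_⟩
  have hk' : (a : A) * (a + 1) = k + k := by exact_mod_cast congrArg (Int.cast (R := A)) hk
  linear_combination (norm := noncomm_ring) -hk' + 2 * (Int.cast_commute a r).eq

theorem exists_sq_two_mul_sub_eq_intCast_iff {Δ : ℤ} :
    (∃ y : R, (2 * y - Δ) ^ 2 = Δ) ↔
      ∃ b : A, b ^ 2 = Δ ∧ ∃ (a : ℤ) (r : A), r ∈ R ∧ b = a + 2 * r := by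
  constructor
  · rintro ⟨y, hy⟩
    have hb : (2 * (y : A) - Δ) ^ 2 = Δ := by
      simpa only [map_pow, map_sub, map_mul, map_ofNat, map_intCast, coe_subtype] using
        congrArg R.subtype hy
    refine ⟨2 * y - Δ, hb, -Δ, y, y.2, ?_⟩
    push_cast
    noncomm_ring
  · rintro ⟨b, hb, a, r, hr, rfl⟩
    obtain ⟨y, hyR, hy⟩ := exists_two_mul_eq_sq_add_self hr a
    refine ⟨⟨y, hyR⟩, R.subtype_injective ?_⟩
    simp only [map_pow, map_sub, map_mul, map_ofNat, map_intCast, coe_subtype]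
    rw [hy, hb, add_sub_cancel_left, hb]

end Subring

namespace QuaternionAlgebra

variable {F : Type*} [Field F] {c₁ c₂ c₃ : F} {x : ℍ[F,c₁,c₂,c₃]} {d : F}

/-- Cayley–Hamilton: `x * x = trd x * x - nrd x`, so if `trd x ≠ 0` then `x` is a scalar. -/
theorem self_add_star_eq_zero_of_mul_self_eq_coe (hd : ¬IsSquare d) (hx : x * x = d) :
    x + star x = 0 := by
  obtain ⟨t, htr⟩ : ∃ t : F, x + star x = t := ⟨_, self_add_star' x⟩
  set n := (star x * x).re
  have hcayley : (t : ℍ[F,c₁,c₂,c₃]) * x = ↑(d + n) := by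
    rw [← htr, add_mul, hx, coe_add, ← star_mul_eq_coe]
  by_cases ht : t = 0
  · rw [htr, ht, coe_zero]
  · have hxe : x = ↑((d + n) / t) := by
      rw [div_eq_inv_mul, coe_mul, ← hcayley, ← mul_assoc, ← coe_mul, inv_mul_cancel₀ ht,
        coe_one, one_mul]
    refine absurd ⟨(d + n) / t, coe_injective (c₁ := c₁) (c₂ := c₂) (c₃ := c₃) ?_⟩ hd
    rw [← hx, coe_mul, ← hxe]

theorem mul_self_eq_coe_iff (hd : ¬IsSquare d) :
    x * x = d ↔ x + star x = 0 ∧ x * star x = ↑(-d) := by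
  refine ⟨fun hx => ?_, fun ⟨htr, hn⟩ => ?_⟩
  · have htr := self_add_star_eq_zero_of_mul_self_eq_coe hd hx
    exact ⟨htr, by rw [eq_neg_of_add_eq_zero_right htr, mul_neg, hx, coe_neg]⟩
  · rwa [eq_neg_of_add_eq_zero_right htr, mul_neg, coe_neg, neg_inj] at hn

end QuaternionAlgebra

/-- Lemma 2.1, Gross lattice criterion: for a quaternion algebra `B`
over `ℚ`, an order `R ⊆ B` and the imaginary quadratic order `O` of discriminant `Δ < 0`,
there is a ring embedding `O ↪ R` iff `|Δ|` is represented by the Gross lattice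
`R₀ = {x ∈ ℤ + 2R : trd x = 0}` with the reduced norm, i.e. iff there is `b` with
`trd b = b + star b = 0`, `b ∈ ℤ + 2R`, and `nrd b = b * star b = |Δ|`. -/
theorem gross_lattice_embedding_criterion (c₁ c₂ : ℚ)
    (R : Subring (QuaternionAlgebra ℚ c₁ 0 c₂)) (Δ : ℤ) (hΔneg : Δ < 0)
    (hΔ4 : Δ % 4 = 0 ∨ Δ % 4 = 1) :
    (∃ f : ImagQuadOrder Δ →+* R, Function.Injective f) ↔
      ∃ b : QuaternionAlgebra ℚ c₁ 0 c₂,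
        (b + star b = 0) ∧
        (∃ (a : ℤ) (r : QuaternionAlgebra ℚ c₁ 0 c₂), r ∈ R ∧ b = (a : _) + 2 * r) ∧
        b * star b = ((|Δ| : ℤ) : QuaternionAlgebra ℚ c₁ 0 c₂) := by
  have : CharZero ℍ[ℚ,c₁,0,c₂] :=
    charZero_of_injective_algebraMap (R := ℚ) QuaternionAlgebra.coe_injective
  have : IsAddTorsionFree ℍ[ℚ,c₁,0,c₂] := .of_module_rat _
  have : IsAddTorsionFree R := R.subtype_injective.isAddTorsionFree R.subtype.toAddMonoidHom
  have hΔ : ¬IsSquare (Δ : ℚ) := fun h => (Int.cast_lt_zero.mpr hΔneg).not_ge h.nonneg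
  rw [ImagQuadOrder.exists_injective_ringHom_iff hΔneg hΔ4]
  simp_rw [ImagQuadOrder.aeval_poly_eq_zero_iff hΔ4]
  rw [Subring.exists_sq_two_mul_sub_eq_intCast_iff]
  simp_rw [sq, ← QuaternionAlgebra.coe_intCast, QuaternionAlgebra.mul_self_eq_coe_iff hΔ,
    abs_of_neg hΔneg, Int.cast_neg]
  exact exists_congr fun b => by tauto
end

section
/- Let Δ₀ be a negative integer with Δ₀ ≡ 0 or 1 (mod 4), ℓ a prime, n ∈ ℕ, and Δ a negative integer. Define Q(X,Y,Z) = |Δ₀|X² + 4ℓ^{2n+1}Y² + ℓ^{2n+1}(Δ₀² + |Δ₀|)Z² + 4ℓ^{2n+1}Δ₀·YZ. Suppose integers x, y, z satisfy Q(x,y,z) = Δ₀²·|Δ| and (y,z) ≠ (0,0). Then ℓ^{2n+1} ≤ Δ₀²·|Δ|, and consequently n + 1 ≤ log(Δ₀²|Δ|)/(2 log ℓ) + 1/2. -/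
/-- key estimate in the proof of Theorem 3.1, first case:
if integers `x, y, z` with `(y, z) ≠ (0, 0)` satisfy
`Q(x,y,z) = |Δ₀|x² + 4ℓ^{2n+1}y² + ℓ^{2n+1}(Δ₀² + |Δ₀|)z² + 4ℓ^{2n+1}Δ₀yz = Δ₀²|Δ|`,
then `ℓ^{2n+1} ≤ Δ₀²|Δ|` and hence `n + 1 ≤ log(Δ₀²|Δ|)/(2 log ℓ) + 1/2`. -/
theorem quadratic_form_bound (Δ₀ Δ : ℤ) (hΔ₀ : Δ₀ < 0)
    (hΔ₀4 : Δ₀ % 4 = 0 ∨ Δ₀ % 4 = 1) (hΔ : Δ < 0)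
    (ℓ : ℕ) (hℓ : ℓ.Prime) (n : ℕ) (x y z : ℤ)
    (hQ : |Δ₀| * x ^ 2 + 4 * (ℓ : ℤ) ^ (2 * n + 1) * y ^ 2
        + (ℓ : ℤ) ^ (2 * n + 1) * (Δ₀ ^ 2 + |Δ₀|) * z ^ 2
        + 4 * (ℓ : ℤ) ^ (2 * n + 1) * Δ₀ * y * z = Δ₀ ^ 2 * |Δ|)
    (hyz : ¬(y = 0 ∧ z = 0)) :
    (ℓ : ℤ) ^ (2 * n + 1) ≤ Δ₀ ^ 2 * |Δ| ∧
    ((n : ℝ) + 1) ≤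
      Real.log ((Δ₀ : ℝ) ^ 2 * |(Δ : ℝ)|) / (2 * Real.log ℓ) + 1 / 2 := by
  have habs : |Δ₀| ≥ 1 := by
    rw [abs_of_neg hΔ₀]; omega
  have hL : (1:ℤ) ≤ (ℓ:ℤ) ^ (2*n+1) := one_le_pow₀ (by exact_mod_cast hℓ.one_le)
  have hsq : |Δ₀| * x ^ 2 + (ℓ:ℤ) ^ (2*n+1) * ((2*y + Δ₀*z)^2 + |Δ₀| * z^2)
      = Δ₀ ^ 2 * |Δ| := by rw [← hQ]; ring
  have h1 : (1:ℤ) ≤ (2*y + Δ₀*z)^2 + |Δ₀| * z^2 := by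
    by_cases hz : z = 0
    · subst hz
      have hy : y ≠ 0 := by tauto
      have h0 : (0:ℤ) < y^2 := by positivity
      have : (1:ℤ) ≤ y^2 := h0
      nlinarith [sq_nonneg (2*y)]
    · have h0 : (0:ℤ) < z^2 := by positivity
      have : (1:ℤ) ≤ z^2 := h0
      nlinarith [sq_nonneg (2*y + Δ₀*z)]
  have hx2 : (0:ℤ) ≤ |Δ₀| * x^2 := by positivity
  have h2 : (ℓ:ℤ) ^ (2*n+1) ≤ Δ₀ ^ 2 * |Δ| := by nlinarith
  refine ⟨h2, ?_⟩
  have hℓ2 : (2:ℝ) ≤ (ℓ:ℝ) := by exact_mod_cast hℓ.two_le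
  have hlog : 0 < Real.log ℓ := Real.log_pos (by linarith)
  have hr : (ℓ:ℝ) ^ (2*n+1) ≤ (Δ₀:ℝ)^2 * |(Δ:ℝ)| := by
    have := h2
    rw [abs_of_neg hΔ] at this
    rw [abs_of_neg (show (Δ:ℝ) < 0 by exact_mod_cast hΔ)]
    exact_mod_cast this
  have hpos : (0:ℝ) < (ℓ:ℝ) ^ (2*n+1) := by positivity
  have hkey : ((2*n+1 : ℕ):ℝ) * Real.log ℓ ≤ Real.log ((Δ₀:ℝ)^2 * |(Δ:ℝ)|) := by
    rw [← Real.log_pow]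
    exact Real.log_le_log hpos hr
  have hdiv : ((2*(n:ℝ)+1))/2 ≤ Real.log ((Δ₀:ℝ)^2 * |(Δ:ℝ)|) / (2 * Real.log ℓ) := by
    rw [div_le_div_iff₀ (by norm_num) (by positivity)]
    push_cast at hkey
    nlinarith
  linarith
end

section
/- Define δ: ℕ≥1 → ℝ by δ(n) = 0.2485·log n − Σ_{p | n} (log p/(p+1))·((1 − p^{−v_p(n)})/(1 − p^{−1})), the sum over primes p dividing n, where v_p(n) is the p-adic valuation. Then: (a) δ is additive, i.e. δ(mn) = δ(m) + δ(n) for coprime m, n; (b) δ(p^{k+1}) ≥ δ(p^k) for every prime p and integer k ≥ 1; (c) δ(p) > 0 for every prime p ≥ 5; and consequently (d) δ(n) ≥ δ(2) + δ(3) ≥ −0.0605 for all n ≥ 1. -/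
/-- The additive function `δ(n) = 0.2485·log n −
Σ_{p ∣ n} (log p/(p+1))·((1 − p^{−v_p(n)})/(1 − p^{−1}))` from the proof of
Proposition 5.4 (following [BHK18, Section 4]). -/
noncomputable def deltaFun (n : ℕ) : ℝ :=
  0.2485 * Real.log n -
    ∑ p ∈ n.primeFactors,
      (Real.log p / ((p : ℝ) + 1)) *
        ((1 - (p : ℝ) ^ (-(n.factorization p : ℤ))) / (1 - (p : ℝ)⁻¹))

noncomputable def gTerm (p k : ℕ) : ℝ :=
  0.2485 * ((k : ℝ) * Real.log p) -
    (Real.log p / ((p : ℝ) + 1)) * ((1 - (p : ℝ) ^ (-(k : ℤ))) / (1 - (p : ℝ)⁻¹))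

lemma deltaFun_eq_sum {n : ℕ} (hn : n ≠ 0) :
    deltaFun n = ∑ p ∈ n.primeFactors, gTerm p (n.factorization p) := by
  have hlog : Real.log n = ∑ p ∈ n.primeFactors, (n.factorization p : ℝ) * Real.log p := by
    conv_lhs => rw [← Nat.factorization_prod_pow_eq_self hn]
    rw [Nat.prod_factorization_eq_prod_primeFactors]
    push_cast
    rw [Real.log_prod]
    · exact Finset.sum_congr rfl fun p hp => by rw [Real.log_pow]
    · intro p hp
      have hp' := Nat.prime_of_mem_primeFactors hp
      have : (0:ℝ) < p := by exact_mod_cast hp'.pos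
      positivity
  unfold deltaFun gTerm
  rw [hlog, Finset.mul_sum, ← Finset.sum_sub_distrib]

lemma gTerm_succ {p : ℕ} (hp : 2 ≤ p) (k : ℕ) :
    gTerm p (k + 1) = gTerm p k + Real.log p * (0.2485 - ((p : ℝ) ^ k)⁻¹ / ((p : ℝ) + 1)) := by
  have hx1 : (1 : ℝ) < p := by exact_mod_cast hp
  have hx0 : (p : ℝ) ≠ 0 := by linarith
  have h1 : (p : ℝ) ^ (-((k : ℕ) : ℤ)) = ((p : ℝ) ^ k)⁻¹ := by
    rw [zpow_neg, zpow_natCast]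
  have h2 : (p : ℝ) ^ (-(((k + 1 : ℕ)) : ℤ)) = ((p : ℝ) ^ (k + 1))⁻¹ := by
    rw [zpow_neg, zpow_natCast]
  have hinv : 1 - (p : ℝ)⁻¹ ≠ 0 := by
    have : (p : ℝ)⁻¹ < 1 := inv_lt_one_of_one_lt₀ hx1
    linarith
  have key : (1 - ((p : ℝ) ^ (k + 1))⁻¹) / (1 - (p : ℝ)⁻¹) =
      (1 - ((p : ℝ) ^ k)⁻¹) / (1 - (p : ℝ)⁻¹) + ((p : ℝ) ^ k)⁻¹ := by
    rw [div_add' _ _ _ hinv]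
    congr 1
    rw [pow_succ, mul_inv]
    ring
  unfold gTerm
  rw [h1, h2, key]
  push_cast
  ring

lemma gTerm_mono {p : ℕ} (hp : 2 ≤ p) {k : ℕ} (hk : 1 ≤ k) :
    gTerm p k ≤ gTerm p (k + 1) := by
  rw [gTerm_succ hp k]
  have hx1 : (1 : ℝ) < p := by exact_mod_cast hp
  have hx2 : (2 : ℝ) ≤ p := by exact_mod_cast hp
  have hL : 0 ≤ Real.log p := Real.log_nonneg (by linarith)
  have hpk : (2 : ℝ) ≤ (p : ℝ) ^ k := by
    calc (2 : ℝ) ≤ (p : ℝ) := by exact_mod_cast hp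
    _ ≤ (p : ℝ) ^ k := le_self_pow₀ (by linarith) (by omega)
  have hq : ((p : ℝ) ^ k)⁻¹ / ((p : ℝ) + 1) ≤ (2 : ℝ)⁻¹ / (2 + 1) := by
    gcongr <;> linarith
  nlinarith

lemma gTerm_one_le {p : ℕ} (hp : 2 ≤ p) {k : ℕ} (hk : 1 ≤ k) : gTerm p 1 ≤ gTerm p k := by
  induction k, hk using Nat.le_induction with
  | base => exact le_rfl
  | succ n hn ih => exact ih.trans (gTerm_mono hp hn)

lemma gTerm_one {p : ℕ} (hp : 2 ≤ p) :
    gTerm p 1 = Real.log p * (0.2485 - ((p : ℝ) + 1)⁻¹) := by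
  have hx1 : (1 : ℝ) < p := by exact_mod_cast hp
  have hinv : 1 - (p : ℝ)⁻¹ ≠ 0 := by
    have : (p : ℝ)⁻¹ < 1 := inv_lt_one_of_one_lt₀ hx1
    linarith
  unfold gTerm
  rw [show (-((1:ℕ):ℤ)) = (-1 : ℤ) by norm_num, zpow_neg_one, div_self hinv]
  push_cast
  field_simp

lemma deltaFun_pow {p : ℕ} (hp : p.Prime) {k : ℕ} (hk : 1 ≤ k) :
    deltaFun (p ^ k) = gTerm p k := by
  rw [deltaFun_eq_sum (pow_ne_zero _ hp.pos.ne'),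
    Nat.primeFactors_prime_pow (by omega) hp, Finset.sum_singleton,
    hp.factorization_pow]
  simp

lemma gTerm_one_pos {p : ℕ} (hp : p.Prime) (h5 : 5 ≤ p) : 0 < gTerm p 1 := by
  rw [gTerm_one hp.two_le]
  have hx : (5 : ℝ) ≤ p := by exact_mod_cast h5
  have h1 : ((p : ℝ) + 1)⁻¹ ≤ (6 : ℝ)⁻¹ := by
    gcongr <;> linarith
  have hL : 0 < Real.log p := Real.log_pos (by linarith)
  nlinarith

/-- (a) `δ` is additive on coprime arguments; (b) `δ(p^{k+1}) ≥ δ(p^k)`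
for `k ≥ 1`; (c) `δ(p) > 0` for primes `p ≥ 5`; (d) `δ(n) ≥ δ(2) + δ(3) ≥ −0.0605`. -/
theorem deltaFun_props :
    (∀ m n : ℕ, 1 ≤ m → 1 ≤ n → m.Coprime n →
        deltaFun (m * n) = deltaFun m + deltaFun n) ∧
    (∀ (p k : ℕ), p.Prime → 1 ≤ k → deltaFun (p ^ k) ≤ deltaFun (p ^ (k + 1))) ∧
    (∀ p : ℕ, p.Prime → 5 ≤ p → 0 < deltaFun p) ∧
    (∀ n : ℕ, 1 ≤ n → deltaFun 2 + deltaFun 3 ≤ deltaFun n) ∧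
    (-0.0605 ≤ deltaFun 2 + deltaFun 3) := by
  have hd2 : deltaFun 2 = gTerm 2 1 := by
    have := deltaFun_pow Nat.prime_two (k := 1) le_rfl
    simpa using this
  have hd3 : deltaFun 3 = gTerm 3 1 := by
    have := deltaFun_pow Nat.prime_three (k := 1) le_rfl
    simpa using this
  have hg2 : gTerm 2 1 = Real.log 2 * (0.2485 - 3⁻¹) := by
    rw [gTerm_one (by norm_num)]; norm_num
  have hg3 : gTerm 3 1 = Real.log 3 * (0.2485 - 4⁻¹) := by
    rw [gTerm_one (by norm_num)]; norm_num
  have hl2 : (0:ℝ) ≤ Real.log 2 := Real.log_nonneg (by norm_num)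
  have hl3 : (0:ℝ) ≤ Real.log 3 := Real.log_nonneg (by norm_num)
  have hg2np : gTerm 2 1 ≤ 0 := by
    rw [hg2]; exact mul_nonpos_of_nonneg_of_nonpos hl2 (by norm_num)
  have hg3np : gTerm 3 1 ≤ 0 := by
    rw [hg3]; exact mul_nonpos_of_nonneg_of_nonpos hl3 (by norm_num)
  refine ⟨?_, ?_, ?_, ?_, ?_⟩
  · -- (a) additivity
    intro m n hm hn hmn
    have hm0 : m ≠ 0 := by omega
    have hn0 : n ≠ 0 := by omega
    have hdisj := hmn.disjoint_primeFactors
    rw [deltaFun_eq_sum (by positivity), deltaFun_eq_sum hm0, deltaFun_eq_sum hn0,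
      Nat.primeFactors_mul hm0 hn0, Finset.sum_union hdisj]
    congr 1
    · refine Finset.sum_congr rfl fun p hp => ?_
      have hnp : n.factorization p = 0 := by
        refine Finsupp.notMem_support_iff.mp ?_
        rw [Nat.support_factorization]
        exact Finset.disjoint_left.mp hdisj hp
      rw [Nat.factorization_mul hm0 hn0]
      simp [hnp]
    · refine Finset.sum_congr rfl fun p hp => ?_
      have hmp : m.factorization p = 0 := by
        refine Finsupp.notMem_support_iff.mp ?_
        rw [Nat.support_factorization]
        exact Finset.disjoint_right.mp hdisj hp
      rw [Nat.factorization_mul hm0 hn0]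
      simp [hmp]
  · -- (b)
    intro p k hp hk
    rw [deltaFun_pow hp hk, deltaFun_pow hp (by omega)]
    exact gTerm_mono hp.two_le hk
  · -- (c)
    intro p hp h5
    have := deltaFun_pow hp (k := 1) le_rfl
    rw [pow_one] at this
    rw [this]
    exact gTerm_one_pos hp h5
  · -- (d)
    intro n hn
    have hn0 : n ≠ 0 := by omega
    rw [deltaFun_eq_sum hn0, hd2, hd3]
    set S := n.primeFactors with hS
    set h : ℕ → ℝ := fun p => if p = 2 then gTerm 2 1 else if p = 3 then gTerm 3 1 else 0
      with hh
    have step1 : ∑ p ∈ S, h p ≤ ∑ p ∈ S, gTerm p (n.factorization p) := by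
      refine Finset.sum_le_sum fun p hpS => ?_
      have hp : p.Prime := Nat.prime_of_mem_primeFactors hpS
      have hv : 1 ≤ n.factorization p :=
        hp.factorization_pos_of_dvd hn0 (Nat.dvd_of_mem_primeFactors hpS)
      have hle := gTerm_one_le hp.two_le hv
      by_cases h2 : p = 2
      · subst h2; simpa [hh] using hle
      by_cases h3 : p = 3
      · subst h3; simpa [hh, h2] using hle
      · have h5 : 5 ≤ p := by
          have := hp.two_le
          have h4 : p ≠ 4 := by rintro rfl; norm_num at hp
          omega
        have : (0:ℝ) < gTerm p 1 := gTerm_one_pos hp h5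
        simp only [hh, h2, h3, if_false]
        linarith
    have step2 : ∑ p ∈ S, h p = ∑ p ∈ S ∩ {2, 3}, h p := by
      refine (Finset.sum_subset Finset.inter_subset_left fun p hpS hpn => ?_).symm
      have : p ≠ 2 ∧ p ≠ 3 := by
        constructor <;> rintro rfl <;> simp_all [Finset.mem_inter]
      simp [hh, this.1, this.2]
    have step3 : ∑ p ∈ ({2, 3} : Finset ℕ), h p ≤ ∑ p ∈ S ∩ {2, 3}, h p := by
      have hsub : S ∩ {2, 3} ⊆ ({2, 3} : Finset ℕ) := Finset.inter_subset_right
      have hnp : ∀ p ∈ ({2, 3} : Finset ℕ), p ∉ S ∩ {2, 3} → 0 ≤ -h p := by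
        intro p hp _
        rcases Finset.mem_insert.mp hp with rfl | hp'
        · simp [hh]; linarith
        · rcases Finset.mem_singleton.mp hp' with rfl
          simp [hh]; linarith
      have := Finset.sum_le_sum_of_subset_of_nonneg hsub hnp
      simp only [Finset.sum_neg_distrib] at this
      linarith
    have step4 : ∑ p ∈ ({2, 3} : Finset ℕ), h p = gTerm 2 1 + gTerm 3 1 := by
      rw [Finset.sum_pair (by norm_num)]
      simp [hh]
    linarith
  · -- numeric bound
    rw [hd2, hd3, hg2, hg3]
    have hl2' : Real.log 2 < 0.6931471808 := Real.log_two_lt_d9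
    have hl32 : Real.log 3 ≤ 8 / 5 * Real.log 2 := by
      have h : ((3:ℝ) ^ 5) ≤ (2:ℝ) ^ 8 := by norm_num
      have := Real.log_le_log (by positivity) h
      rw [Real.log_pow, Real.log_pow] at this
      push_cast at this
      linarith
    nlinarith
end

section
/- Let B be a quaternion algebra over ℚ with standard involution x ↦ x̄, and suppose ψ, φ ∈ B satisfy φ² = −ℓ and ψ² + |Δ₀|·ψ + (Δ₀² + |Δ₀|)/4 = 0 and ψ·φ = φ·ψ̄, where ℓ is a prime and Δ₀ < 0 with Δ₀ ≡ 0 or 1 (mod 4). Then {1, ψ, φ, ψφ} spans a subring ℤ[ψ, φ] of B which is a ℤ-lattice of rank 4, and the reduced norm restricted to its Gross lattice Λ = ⟨|Δ₀| + 2ψ, 2φ, 2ψφ⟩_ℤ in the coordinates (X, Y, Z) is the ternary quadratic form |Δ₀|X² + 4ℓY² + ℓ(Δ₀² + |Δ₀|)Z² + 4ℓΔ₀·YZ. -/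
/-!
The three generators `ω = |Δ₀| + 2ψ`, `2φ`, `2ψφ` of the Gross lattice all satisfy `x̄ = -x`,
so `b b̄ = -b²` for every `b` in the lattice, and `b²` is read off from the squares and pairwise
anticommutators of the generators. Everything follows from `ψφ + φψ = -|Δ₀|φ`, which is
`ψφ = φψ̄` rewritten with `ψ̄ = -|Δ₀| - ψ`: it makes `ω` anticommute with `φ` and with `ψφ`, and
gives `(ψφ)² = ℓ(ψ² + |Δ₀|ψ)` and `φ(ψφ) + (ψφ)φ = |Δ₀|ℓ`.
-/

section
variable {R : Type*} [Ring R] {d ℓ : ℤ} {ψ φ : R}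

theorem sq_intCast_mul_add_three (x y z : ℤ) (u v w : R) :
    ((x : R) * u + y * v + z * w) ^ 2 =
      (x : R) ^ 2 * u ^ 2 + (y : R) ^ 2 * v ^ 2 + (z : R) ^ 2 * w ^ 2
        + (x : R) * y * (u * v + v * u) + (x : R) * z * (u * w + w * u)
        + (y : R) * z * (v * w + w * v) := by
  simp only [← Int.cast_mul, ← Int.cast_pow]
  simp only [← zsmul_eq_mul]
  simp only [sq, add_mul, mul_add, smul_mul_assoc, mul_smul_comm, smul_add, mul_smul]
  rw [smul_comm y x, smul_comm z x, smul_comm z y]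
  abel

theorem mul_add_mul_swap_eq_neg_of_mul_eq_mul_star [StarRing R] (htr : ψ + star ψ = -d)
    (hcomm : ψ * φ = φ * star ψ) : ψ * φ + φ * ψ = -(d * φ) := by
  rw [hcomm, eq_sub_of_add_eq' htr]
  noncomm_ring [(Int.cast_comm d φ).symm]

theorem sq_intCast_add_two_mul (hψ : 4 * (ψ ^ 2 + d * ψ) = -((d ^ 2 + d : ℤ) : R)) :
    ((d : R) + 2 * ψ) ^ 2 = ((-d : ℤ) : R) := by
  calc ((d : R) + 2 * ψ) ^ 2 = d ^ 2 + 4 * (ψ ^ 2 + d * ψ) := by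
        noncomm_ring [(Int.cast_comm d ψ).symm]
    _ = ((-d : ℤ) : R) := by rw [hψ]; push_cast; abel

theorem sq_two_mul_eq_of_sq_eq_neg (hφ : φ ^ 2 = -ℓ) : (2 * φ) ^ 2 = ((-(4 * ℓ) : ℤ) : R) := by
  rw [(Commute.ofNat_left 2 φ).mul_pow, hφ]; push_cast; noncomm_ring

theorem sq_two_mul_mul (hanti : ψ * φ + φ * ψ = -(d * φ)) (hφ : φ ^ 2 = -ℓ)
    (hψ : 4 * (ψ ^ 2 + d * ψ) = -((d ^ 2 + d : ℤ) : R)) :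
    (2 * (ψ * φ)) ^ 2 = ((-(ℓ * (d ^ 2 + d)) : ℤ) : R) := by
  calc (2 * (ψ * φ)) ^ 2 = 4 * (ψ * (φ * ψ) * φ) := by noncomm_ring
    _ = -(4 * (ψ ^ 2 + d * ψ)) * φ ^ 2 := by
      rw [eq_sub_of_add_eq' hanti]
      noncomm_ring [← (Int.cast_commute d ψ).left_comm]
    _ = ((-(ℓ * (d ^ 2 + d)) : ℤ) : R) := by
      rw [hψ, hφ, neg_neg, mul_neg, ← Int.cast_mul, ← Int.cast_neg, mul_comm]

theorem anticomm_intCast_add_two_mul_two_mul (hanti : ψ * φ + φ * ψ = -(d * φ)) :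
    ((d : R) + 2 * ψ) * (2 * φ) + 2 * φ * ((d : R) + 2 * ψ) = 0 := by
  calc _ = 4 * (ψ * φ + φ * ψ) + 4 * (d * φ) := by noncomm_ring [(Int.cast_comm d φ).symm]
    _ = 0 := by rw [hanti]; noncomm_ring

theorem anticomm_intCast_add_two_mul_two_mul_mul (hanti : ψ * φ + φ * ψ = -(d * φ)) :
    ((d : R) + 2 * ψ) * (2 * (ψ * φ)) + 2 * (ψ * φ) * ((d : R) + 2 * ψ) = 0 := by
  calc _ = 4 * ψ * (ψ * φ + φ * ψ) + 4 * (d * (ψ * φ)) := by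
        noncomm_ring [(Int.cast_comm d _).symm]
    _ = 0 := by rw [hanti]; noncomm_ring [← (Int.cast_commute d ψ).left_comm]

theorem anticomm_two_mul_two_mul_mul (hanti : ψ * φ + φ * ψ = -(d * φ)) (hφ : φ ^ 2 = -ℓ) :
    2 * φ * (2 * (ψ * φ)) + 2 * (ψ * φ) * (2 * φ) = ((4 * d * ℓ : ℤ) : R) := by
  calc _ = 4 * ((ψ * φ + φ * ψ) * φ) := by noncomm_ring
    _ = ((4 * d * ℓ : ℤ) : R) := by
      rw [hanti, neg_mul, mul_assoc, ← sq, hφ]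
      push_cast
      noncomm_ring

section StarRing
variable [StarRing R]

theorem mul_star_eq_neg_sq_of_mem_skewAdjoint {b : R} (hb : b ∈ skewAdjoint R) :
    b * star b = -b ^ 2 := by
  rw [skewAdjoint.mem_iff.mp hb, mul_neg, sq]

theorem intCast_mul_mem_skewAdjoint (x : ℤ) {u : R} (hu : u ∈ skewAdjoint R) :
    (x : R) * u ∈ skewAdjoint R := by
  rw [← zsmul_eq_mul]; exact zsmul_mem hu x

theorem two_mul_mem_skewAdjoint {u : R} (hu : u ∈ skewAdjoint R) : 2 * u ∈ skewAdjoint R := by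
  rw [two_mul]; exact add_mem hu hu

theorem intCast_add_two_mul_mem_skewAdjoint (htr : ψ + star ψ = -d) :
    (d : R) + 2 * ψ ∈ skewAdjoint R := by
  rw [skewAdjoint.mem_iff, star_add, star_intCast, star_mul, star_ofNat, eq_sub_of_add_eq' htr]
  noncomm_ring

theorem mul_mem_skewAdjoint_of_mul_eq_mul_star (hφ : φ ∈ skewAdjoint R)
    (hcomm : ψ * φ = φ * star ψ) : ψ * φ ∈ skewAdjoint R := by
  rw [skewAdjoint.mem_iff, star_mul, skewAdjoint.mem_iff.mp hφ, neg_mul, hcomm]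

theorem mul_star_eq_of_gross_relations (hφ : φ ^ 2 = -ℓ)
    (hψ : 4 * (ψ ^ 2 + d * ψ) = -((d ^ 2 + d : ℤ) : R)) (htrψ : ψ + star ψ = -d)
    (htrφ : φ + star φ = 0) (hcomm : ψ * φ = φ * star ψ) (x y z : ℤ) :
    let b := (x : R) * ((d : R) + 2 * ψ) + (y : R) * (2 * φ) + (z : R) * (2 * (ψ * φ))
    b * star b =
      ((d * x ^ 2 + 4 * ℓ * y ^ 2 + ℓ * (d ^ 2 + d) * z ^ 2 - 4 * d * ℓ * y * z : ℤ) : R) := by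
  intro b
  have hφ_skew : φ ∈ skewAdjoint R :=
    skewAdjoint.mem_iff.mpr (eq_neg_of_add_eq_zero_right htrφ)
  have hb : b ∈ skewAdjoint R :=
    add_mem (add_mem
      (intCast_mul_mem_skewAdjoint x (intCast_add_two_mul_mem_skewAdjoint htrψ))
      (intCast_mul_mem_skewAdjoint y (two_mul_mem_skewAdjoint hφ_skew)))
      (intCast_mul_mem_skewAdjoint z
        (two_mul_mem_skewAdjoint (mul_mem_skewAdjoint_of_mul_eq_mul_star hφ_skew hcomm)))
  have hanti := mul_add_mul_swap_eq_neg_of_mul_eq_mul_star htrψ hcomm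
  rw [mul_star_eq_neg_sq_of_mem_skewAdjoint hb, sq_intCast_mul_add_three,
    sq_intCast_add_two_mul hψ, sq_two_mul_eq_of_sq_eq_neg hφ, sq_two_mul_mul hanti hφ hψ,
    anticomm_intCast_add_two_mul_two_mul hanti, anticomm_intCast_add_two_mul_two_mul_mul hanti,
    anticomm_two_mul_two_mul_mul hanti hφ]
  norm_cast
  congr 1
  ring

end StarRing
end

theorem gross_lattice_norm_form_general (c₁ c₂ : ℚ) (ℓ : ℕ)
    (Δ₀ : ℤ) (hΔ₀ : Δ₀ < 0)
    (ψ φ : QuaternionAlgebra ℚ c₁ 0 c₂)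
    (hφ2 : φ ^ 2 = -((ℓ : ℤ) : QuaternionAlgebra ℚ c₁ 0 c₂))
    (hψ2 : ψ ^ 2 + ((|Δ₀| : ℤ) : QuaternionAlgebra ℚ c₁ 0 c₂) * ψ
        + algebraMap ℚ (QuaternionAlgebra ℚ c₁ 0 c₂)
            (((Δ₀ ^ 2 + |Δ₀| : ℤ) : ℚ) / 4) = 0)
    (htrψ : ψ + star ψ = ((-|Δ₀| : ℤ) : QuaternionAlgebra ℚ c₁ 0 c₂))
    (htrφ : φ + star φ = 0)
    (hcomm : ψ * φ = φ * star ψ) :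
    ∀ x y z : ℤ,
      letI b := (x : QuaternionAlgebra ℚ c₁ 0 c₂) *
            (((|Δ₀| : ℤ) : QuaternionAlgebra ℚ c₁ 0 c₂) + 2 * ψ)
          + (y : QuaternionAlgebra ℚ c₁ 0 c₂) * (2 * φ)
          + (z : QuaternionAlgebra ℚ c₁ 0 c₂) * (2 * (ψ * φ))
      b * star b =
        (((|Δ₀| * x ^ 2 + 4 * (ℓ : ℤ) * y ^ 2
            + (ℓ : ℤ) * (Δ₀ ^ 2 + |Δ₀|) * z ^ 2
            + 4 * (ℓ : ℤ) * Δ₀ * y * z : ℤ)) : QuaternionAlgebra ℚ c₁ 0 c₂) := by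
  intro x y z
  have hψ : 4 * (ψ ^ 2 + (|Δ₀| : ℤ) * ψ) =
      -((|Δ₀| ^ 2 + |Δ₀| : ℤ) : QuaternionAlgebra ℚ c₁ 0 c₂) := by
    rw [sq_abs, eq_neg_of_add_eq_zero_left hψ2, mul_neg, ← map_ofNat (algebraMap ℚ _) 4,
      ← map_mul, mul_div_cancel₀ _ four_ne_zero, map_intCast]
  rw [Int.cast_neg] at htrψ
  refine (mul_star_eq_of_gross_relations hφ2 hψ htrψ htrφ hcomm x y z).trans ?_
  rw [abs_of_neg hΔ₀]
  congr 1
  ring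

/-- in a quaternion algebra `B` over `ℚ`, suppose `ψ, φ` satisfy
`φ² = −ℓ`, `ψ² + |Δ₀|ψ + (Δ₀² + |Δ₀|)/4 = 0`, `ψφ = φψ̄`, with `trd φ = 0` and
`trd ψ = −|Δ₀|`. Then the reduced norm on the Gross lattice
`Λ = ⟨|Δ₀| + 2ψ, 2φ, 2ψφ⟩_ℤ` is the ternary form
`|Δ₀|X² + 4ℓY² + ℓ(Δ₀² + |Δ₀|)Z² + 4ℓΔ₀YZ`. -/
theorem gross_lattice_norm_form (c₁ c₂ : ℚ) (ℓ : ℕ) (hℓ : ℓ.Prime)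
    (Δ₀ : ℤ) (hΔ₀ : Δ₀ < 0) (hΔ₀4 : Δ₀ % 4 = 0 ∨ Δ₀ % 4 = 1)
    (ψ φ : QuaternionAlgebra ℚ c₁ 0 c₂)
    (hφ2 : φ ^ 2 = -((ℓ : ℤ) : QuaternionAlgebra ℚ c₁ 0 c₂))
    (hψ2 : ψ ^ 2 + ((|Δ₀| : ℤ) : QuaternionAlgebra ℚ c₁ 0 c₂) * ψ
        + algebraMap ℚ (QuaternionAlgebra ℚ c₁ 0 c₂)
            (((Δ₀ ^ 2 + |Δ₀| : ℤ) : ℚ) / 4) = 0)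
    (htrψ : ψ + star ψ = ((-|Δ₀| : ℤ) : QuaternionAlgebra ℚ c₁ 0 c₂))
    (htrφ : φ + star φ = 0)
    (hcomm : ψ * φ = φ * star ψ) :
    ∀ x y z : ℤ,
      letI b := (x : QuaternionAlgebra ℚ c₁ 0 c₂) *
            (((|Δ₀| : ℤ) : QuaternionAlgebra ℚ c₁ 0 c₂) + 2 * ψ)
          + (y : QuaternionAlgebra ℚ c₁ 0 c₂) * (2 * φ)
          + (z : QuaternionAlgebra ℚ c₁ 0 c₂) * (2 * (ψ * φ))
      b * star b =
        (((|Δ₀| * x ^ 2 + 4 * (ℓ : ℤ) * y ^ 2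
            + (ℓ : ℤ) * (Δ₀ ^ 2 + |Δ₀|) * z ^ 2
            + 4 * (ℓ : ℤ) * Δ₀ * y * z : ℤ)) : QuaternionAlgebra ℚ c₁ 0 c₂) :=
  gross_lattice_norm_form_general c₁ c₂ ℓ Δ₀ hΔ₀ ψ φ hφ2 hψ2 htrψ htrφ hcomm
end
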